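/- Parabolic lemma for CCSK: any trace is causally equivalent to a trace consisting of a (possibly empty) sequence of backward transitions followed by a (possibly empty) sequence of forward transitions, of length at most that of the original trace. -/

import Mathlib

namespace CCSK

/-- Labels: names, co-names, and the silent action τ. -/
inductive Lab : Type
  | name : ℕ → Lab
  | coname : ℕ → Lab
  | tau : Lab
deriving DecidableEq

/-- Complement of a label. -/
def Lab.co : Lab → Lab
  | .name n => .coname n
  | .coname n => .name n
  | .tau => .tau

abbrev Key := ℕ

/-- CCSK processes (with a replication operator for the extended calculus). -/
inductive Proc : Type
  | nil : Proc
  | pre : Lab → Proc → Proc          -- α.X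
  | kpre : Lab → Key → Proc → Proc   -- α[k].X
  | par : Proc → Proc → Proc
  | sum : Proc → Proc → Proc
  | res : Proc → ℕ → Proc            -- X \ a
  | repl : Proc → Proc               -- !X
deriving DecidableEq

/-- Keys occurring in a process. -/
def Proc.keys : Proc → Set Key
  | .nil => ∅
  | .pre _ X => X.keys
  | .kpre _ k X => insert k X.keys
  | .par X Y => X.keys ∪ Y.keys
  | .sum X Y => X.keys ∪ Y.keys
  | .res X _ => X.keys
  | .repl X => X.keys

/-- A process is standard when it contains no keys. -/
def Proc.std (X : Proc) : Prop := X.keys = ∅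

/-- Multiset of keyed-prefix occurrences (label, key). -/
def Proc.keyed : Proc → Multiset (Lab × Key)
  | .nil => 0
  | .pre _ X => X.keyed
  | .kpre a k X => (a, k) ::ₘ X.keyed
  | .par X Y => X.keyed + Y.keyed
  | .sum X Y => X.keyed + Y.keyed
  | .res X _ => X.keyed
  | .repl X => X.keyed

/-- Enhanced keyed labels. -/
inductive ELab : Type
  | base : Lab → Key → ELab          -- α[k]
  | parL : ELab → ELab               -- |_L θ
  | parR : ELab → ELab               -- |_R θ
  | bang : ELab → ELab               -- !θ (replication)
  | syn : ELab → ELab → ELab         -- ⟨θ_L, θ_R⟩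
deriving DecidableEq

/-- Underlying action label ℓ(θ). -/
def ELab.act : ELab → Lab
  | .base a _ => a
  | .parL θ => θ.act
  | .parR θ => θ.act
  | .bang θ => θ.act
  | .syn _ _ => .tau

/-- Key of an enhanced keyed label. -/
def ELab.key : ELab → Key
  | .base _ k => k
  | .parL θ => θ.key
  | .parR θ => θ.key
  | .bang θ => θ.key
  | .syn θ _ => θ.key

/-- Dependency relation ⋖ on enhanced keyed labels (including the extension
for replication labels). -/
inductive Dep : ELab → ELab → Prop
  | base (a : Lab) (k : Key) (θ : ELab) : Dep (.base a k) θ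
  | parL {θ θ'} : Dep θ θ' → Dep (.parL θ) (.parL θ')
  | parR {θ θ'} : Dep θ θ' → Dep (.parR θ) (.parR θ')
  | synSrcL {θL θR θ} : Dep θL θ → Dep (.syn θL θR) θ
  | synSrcR {θL θR θ} : Dep θR θ → Dep (.syn θL θR) θ
  | synTgtL {θ θL θR} : Dep θ θL → Dep θ (.syn θL θR)
  | synTgtR {θ θL θR} : Dep θ θR → Dep θ (.syn θL θR)
  | synSynL {θL θR θL' θR'} : Dep θL θL' → Dep (.syn θL θR) (.syn θL' θR')
  | synSynR {θL θR θL' θR'} : Dep θR θR' → Dep (.syn θL θR) (.syn θL' θR')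
  | bangBang (θ : ELab) : Dep (.bang θ) (.bang θ)
  | bangParL (θ θ' : ELab) : Dep (.bang θ) (.parL θ')
  | bangParRSynL (θL θR θ'' : ELab) : Dep (.bang (.syn θL θR)) (.parR (.parL θ''))
  | bangParRSynR (θL θR θ'' : ELab) : Dep (.bang (.syn θL θR)) (.parR (.parR θ''))
  | bangParR {θ θ' : ELab} : Dep θ θ' → Dep (.bang θ) (.parR θ')

/-- Concurrency of labels: no dependency in either direction. -/
def Conc (θ₁ θ₂ : ELab) : Prop := ¬ Dep θ₁ θ₂ ∧ ¬ Dep θ₂ θ₁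

/-- The proved forward LTS for CCSK (without replication rules). -/
inductive Fwd : Proc → ELab → Proc → Prop
  | act {a k X} : Proc.std X → Fwd (.pre a X) (.base a k) (.kpre a k X)
  | pre {a : Lab} {k : Key} {X X' : Proc} {θ : ELab} : Fwd X θ X' → θ.key ≠ k →
      Fwd (.kpre a k X) θ (.kpre a k X')
  | res {X X' : Proc} {θ : ELab} {a : ℕ} : Fwd X θ X' → θ.act ≠ .name a → θ.act ≠ .coname a →
      Fwd (X.res a) θ (X'.res a)
  | parL {X X' Y : Proc} {θ : ELab} : Fwd X θ X' → θ.key ∉ Y.keys →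
      Fwd (X.par Y) (.parL θ) (X'.par Y)
  | parR {Y Y' X : Proc} {θ : ELab} : Fwd Y θ Y' → θ.key ∉ X.keys →
      Fwd (X.par Y) (.parR θ) (X.par Y')
  | syn {X X' Y Y' : Proc} {θ₁ θ₂ : ELab} : Fwd X θ₁ X' → Fwd Y θ₂ Y' →
      θ₁.act ≠ .tau → θ₂.act = θ₁.act.co → θ₂.key = θ₁.key →
      Fwd (X.par Y) (.syn (.parL θ₁) (.parR θ₂)) (X'.par Y')
  | sumL {X θ X' Y} : Fwd X θ X' → Proc.std Y → Fwd (X.sum Y) θ (X'.sum Y)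
  | sumR {Y θ Y' X} : Fwd Y θ Y' → Proc.std X → Fwd (X.sum Y) θ (X.sum Y')

/-- The proved backward LTS for CCSK (exact symmetric of the forward one).
`Bwd X θ Y` means `X ⇝[θ] Y`. -/
inductive Bwd : Proc → ELab → Proc → Prop
  | act {a k X} : Proc.std X → Bwd (.kpre a k X) (.base a k) (.pre a X)
  | pre {a : Lab} {k : Key} {X' X : Proc} {θ : ELab} : Bwd X' θ X → θ.key ≠ k →
      Bwd (.kpre a k X') θ (.kpre a k X)
  | res {X' X : Proc} {θ : ELab} {a : ℕ} : Bwd X' θ X → θ.act ≠ .name a → θ.act ≠ .coname a →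
      Bwd (X'.res a) θ (X.res a)
  | parL {X' X Y : Proc} {θ : ELab} : Bwd X' θ X → θ.key ∉ Y.keys →
      Bwd (X'.par Y) (.parL θ) (X.par Y)
  | parR {Y' Y X : Proc} {θ : ELab} : Bwd Y' θ Y → θ.key ∉ X.keys →
      Bwd (X.par Y') (.parR θ) (X.par Y)
  | syn {X' X Y' Y : Proc} {θ₁ θ₂ : ELab} : Bwd X' θ₁ X → Bwd Y' θ₂ Y →
      θ₁.act ≠ .tau → θ₂.act = θ₁.act.co → θ₂.key = θ₁.key →
      Bwd (X'.par Y') (.syn (.parL θ₁) (.parR θ₂)) (X.par Y)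
  | sumL {X' θ X Y} : Bwd X' θ X → Proc.std Y → Bwd (X'.sum Y) θ (X.sum Y)
  | sumR {Y' θ Y X} : Bwd Y' θ Y → Proc.std X → Bwd (X.sum Y') θ (X.sum Y)

/-- Combined LTS: `Step true` is forward, `Step false` is backward. -/
def Step : Bool → Proc → ELab → Proc → Prop
  | true => Fwd
  | false => Bwd

/-- Reachability: connected to a standard process by forward/backward moves. -/
def Reachable (X : Proc) : Prop :=
  ∃ X₀ : Proc, X₀.std ∧
    Relation.ReflTransGen (fun A B => ∃ d θ, Step d A θ B) X₀ X

/-- The proved forward LTS for CCSK extended with replication. -/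
inductive FwdR : Proc → ELab → Proc → Prop
  | act {a k X} : Proc.std X → FwdR (.pre a X) (.base a k) (.kpre a k X)
  | pre {a : Lab} {k : Key} {X X' : Proc} {θ : ELab} : FwdR X θ X' → θ.key ≠ k →
      FwdR (.kpre a k X) θ (.kpre a k X')
  | res {X X' : Proc} {θ : ELab} {a : ℕ} : FwdR X θ X' → θ.act ≠ .name a → θ.act ≠ .coname a →
      FwdR (X.res a) θ (X'.res a)
  | parL {X X' Y : Proc} {θ : ELab} : FwdR X θ X' → θ.key ∉ Y.keys →
      FwdR (X.par Y) (.parL θ) (X'.par Y)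
  | parR {Y Y' X : Proc} {θ : ELab} : FwdR Y θ Y' → θ.key ∉ X.keys →
      FwdR (X.par Y) (.parR θ) (X.par Y')
  | syn {X X' Y Y' : Proc} {θ₁ θ₂ : ELab} : FwdR X θ₁ X' → FwdR Y θ₂ Y' →
      θ₁.act ≠ .tau → θ₂.act = θ₁.act.co → θ₂.key = θ₁.key →
      FwdR (X.par Y) (.syn (.parL θ₁) (.parR θ₂)) (X'.par Y')
  | sumL {X θ X' Y} : FwdR X θ X' → Proc.std Y → FwdR (X.sum Y) θ (X'.sum Y)
  | sumR {Y θ Y' X} : FwdR Y θ Y' → Proc.std X → FwdR (X.sum Y) θ (X.sum Y')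
  | repl1 {X X' : Proc} {θ : ELab} : FwdR X θ X' →
      FwdR (.repl X) (.bang θ) ((Proc.repl X).par X')
  | repl2 {X X' X'' : Proc} {θ₁ θ₂ : ELab} : FwdR X θ₁ X' → FwdR X θ₂ X'' →
      θ₁.act ≠ .tau → θ₂.act = θ₁.act.co → θ₂.key = θ₁.key →
      FwdR (.repl X) (.bang (.syn (.parL θ₁) (.parR θ₂)))
        ((Proc.repl X).par (X'.par X''))

/-- The proved backward LTS for CCSK extended with replication. -/
inductive BwdR : Proc → ELab → Proc → Prop
  | act {a k X} : Proc.std X → BwdR (.kpre a k X) (.base a k) (.pre a X)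
  | pre {a : Lab} {k : Key} {X' X : Proc} {θ : ELab} : BwdR X' θ X → θ.key ≠ k →
      BwdR (.kpre a k X') θ (.kpre a k X)
  | res {X' X : Proc} {θ : ELab} {a : ℕ} : BwdR X' θ X → θ.act ≠ .name a → θ.act ≠ .coname a →
      BwdR (X'.res a) θ (X.res a)
  | parL {X' X Y : Proc} {θ : ELab} : BwdR X' θ X → θ.key ∉ Y.keys →
      BwdR (X'.par Y) (.parL θ) (X.par Y)
  | parR {Y' Y X : Proc} {θ : ELab} : BwdR Y' θ Y → θ.key ∉ X.keys →
      BwdR (X.par Y') (.parR θ) (X.par Y)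
  | syn {X' X Y' Y : Proc} {θ₁ θ₂ : ELab} : BwdR X' θ₁ X → BwdR Y' θ₂ Y →
      θ₁.act ≠ .tau → θ₂.act = θ₁.act.co → θ₂.key = θ₁.key →
      BwdR (X'.par Y') (.syn (.parL θ₁) (.parR θ₂)) (X.par Y)
  | sumL {X' θ X Y} : BwdR X' θ X → Proc.std Y → BwdR (X'.sum Y) θ (X.sum Y)
  | sumR {Y' θ Y X} : BwdR Y' θ Y → Proc.std X → BwdR (X.sum Y') θ (X.sum Y)
  | repl1 {X' X : Proc} {θ : ELab} : BwdR X' θ X →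
      BwdR ((Proc.repl X).par X') (.bang θ) (.repl X)
  | repl2 {X' X'' X : Proc} {θ₁ θ₂ : ELab} : BwdR X' θ₁ X → BwdR X'' θ₂ X →
      θ₁.act ≠ .tau → θ₂.act = θ₁.act.co → θ₂.key = θ₁.key →
      BwdR ((Proc.repl X).par (X'.par X''))
        (.bang (.syn (.parL θ₁) (.parR θ₂))) (.repl X)

/-- Combined extended LTS. -/
def StepR : Bool → Proc → ELab → Proc → Prop
  | true => FwdR
  | false => BwdR

/-- Reachability in the extended calculus. -/
def ReachableR (X : Proc) : Prop :=
  ∃ X₀ : Proc, X₀.std ∧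
    Relation.ReflTransGen (fun A B => ∃ d θ, StepR d A θ B) X₀ X

/-- Traces: sequences of composable (forward or backward) transitions. -/
inductive Trace : Proc → Proc → Type
  | nil (X : Proc) : Trace X X
  | cons {X Y Z : Proc} (d : Bool) (θ : ELab) (s : Step d X θ Y)
      (T : Trace Y Z) : Trace X Z

/-- Composition of traces. -/
def Trace.comp : {X Y Z : Proc} → Trace X Y → Trace Y Z → Trace X Z
  | _, _, _, .nil _, U => U
  | _, _, _, .cons d θ s T, U => .cons d θ s (Trace.comp T U)

/-- Length of a trace. -/
def Trace.length : {X Y : Proc} → Trace X Y → ℕ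
  | _, _, .nil _ => 0
  | _, _, .cons _ _ _ T => Trace.length T + 1

/-- All transitions of a trace have direction `d`. -/
def Trace.AllDir (d : Bool) : {X Y : Proc} → Trace X Y → Prop
  | _, _, .nil _ => True
  | _, _, .cons d' _ _ T => d' = d ∧ Trace.AllDir d T

/-- Causal equivalence of traces: the least equivalence relation, closed under
composition, cancelling a transition followed by its reverse, and swapping the
two sides of a concurrency square. -/
inductive CEq : {X Y : Proc} → Trace X Y → Trace X Y → Prop
  | refl {X Y} (T : Trace X Y) : CEq T T
  | symm {X Y} {T T' : Trace X Y} : CEq T T' → CEq T' T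
  | trans {X Y} {T T' T'' : Trace X Y} : CEq T T' → CEq T' T'' → CEq T T''
  | congr {X Y Z : Proc} {d θ} (s : Step d X θ Y) {T T' : Trace Y Z} :
      CEq T T' → CEq (Trace.cons d θ s T) (Trace.cons d θ s T')
  | cancel {X Y Z : Proc} {d θ} (s : Step d X θ Y) (s' : Step (!d) Y θ X)
      (T : Trace X Z) :
      CEq (Trace.cons d θ s (Trace.cons (!d) θ s' T)) T
  | square {X X₁ X₂ Y Z : Proc} {d₁ d₂ θ₁ θ₂}
      (s₁ : Step d₁ X θ₁ X₁) (t₂ : Step d₂ X₁ θ₂ Y)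
      (s₂ : Step d₂ X θ₂ X₂) (t₁ : Step d₁ X₂ θ₁ Y)
      (hc : Conc θ₁ θ₂) (T : Trace Y Z) :
      CEq (Trace.cons d₁ θ₁ s₁ (Trace.cons d₂ θ₂ t₂ T))
          (Trace.cons d₂ θ₂ s₂ (Trace.cons d₁ θ₁ t₁ T))

/-- Removal of the keyed prefix α[k]. -/
def remP (a : Lab) (k : Key) : Proc → Proc
  | .nil => .nil
  | .pre b X => .pre b X
  | .kpre b m X => if b = a ∧ m = k then X else .kpre b m (remP a k X)
  | .par X Y => .par (remP a k X) (remP a k Y)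
  | .sum X Y => .sum (remP a k X) (remP a k Y)
  | .res X n => .res (remP a k X) n
  | .repl X => .repl (remP a k X)

/-- rem_k^α : remove α[k] and its complement (only α[k] when α = τ). -/
def remK (a : Lab) (k : Key) (X : Proc) : Proc :=
  if a = Lab.tau then remP a k X else remP a k (remP a.co k X)

/-- Left projection of enhanced keyed labels (partial). -/
def projL : ELab → Option ELab
  | .parL θ => some θ
  | .syn (.parL θL) _ => some θL
  | _ => none

/-- Right projection of enhanced keyed labels (partial). -/
def projR : ELab → Option ELab
  | .parR θ => some θ
  | .syn _ (.parR θR) => some θR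
  | _ => none

/-- Projection selector: `true` is left, `false` is right. -/
def eproj : Bool → ELab → Option ELab
  | true => projL
  | false => projR

/-- Component selector for parallel processes. -/
def side (b : Bool) (L R : Proc) : Proc := if b then L else R

/-- Labels of the shapes arising from a parallel composition. -/
def ParShape (θ : ELab) : Prop :=
  (∃ φ, θ = ELab.parL φ) ∨ (∃ φ, θ = ELab.parR φ) ∨
    ∃ φ ψ, θ = ELab.syn (ELab.parL φ) (ELab.parR ψ)

/-- The collapsing function σ identifying ! and |_R prefixes. -/
def collapse : ELab → ELab
  | .base a k => .base a k
  | .parL θ => .parL (collapse θ)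
  | .parR θ => .parR (collapse θ)
  | .bang θ => .parR (collapse θ)
  | .syn θ₁ θ₂ => .syn (collapse θ₁) (collapse θ₂)

/-- Sub-term relation: strips sums, restrictions and executed keyed prefixes.
`Strip X Y` means X is a sub-term of Y. -/
inductive Strip : Proc → Proc → Prop
  | refl (X : Proc) : Strip X X
  | sumL {X Y Z : Proc} : Strip X Y → Strip X (Y.sum Z)
  | sumR {X Y Z : Proc} : Strip X Y → Strip X (Z.sum Y)
  | res {X Y : Proc} {a : ℕ} : Strip X Y → Strip X (Y.res a)
  | kpre {X Y : Proc} {a : Lab} {k : Key} : Strip X Y → Strip X (.kpre a k Y)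

/-- A forward transition of the proved LTS, as an object. -/
structure FTrans where
  src : Proc
  lab : ELab
  tgt : Proc
  ok : Fwd src lab tgt

/-- A backward transition of the proved LTS, as an object. -/
structure BTrans where
  src : Proc
  lab : ELab
  tgt : Proc
  ok : Bwd src lab tgt

end CCSK

/-!
A forward step `X → X₁` is the mirror image of a backward step `X₁ ⇝ X`, so a forward step
followed by a backward step `X₁ ⇝ X₂` is a pair of coinitial backward steps. Either they
coincide and cancel, or their labels are concurrent and they close a diamond, so that the square
moves the backward step in front. Neither move lengthens the trace, so backward steps can be
pushed to the front one forward step at a time, by induction on the trace.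
-/

namespace CCSK

theorem fwd_iff_bwd {X Y : Proc} {θ : ELab} : Fwd X θ Y ↔ Bwd Y θ X := by
  constructor <;> intro h <;> induction h <;> constructor <;> assumption

section Keys

variable {X Y : Proc} {θ : ELab}

theorem Bwd.keys_eq (h : Bwd Y θ X) : Y.keys = insert θ.key X.keys := by
  induction h with
  | act hX => simp [Proc.keys, ELab.key, show _ = ∅ from hX]
  | pre _ _ ih => simp [Proc.keys, ih, Set.insert_comm]
  | res _ _ _ ih => simp [Proc.keys, ih]
  | parL _ _ ih => simp [Proc.keys, ELab.key, ih, Set.insert_union]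
  | parR _ _ ih => simp [Proc.keys, ELab.key, ih, Set.union_insert]
  | syn _ _ _ _ hk ih₁ ih₂ =>
      simp only [Proc.keys, ELab.key, ih₁, ih₂, hk, Set.insert_union, Set.union_insert,
        Set.insert_idem]
  | sumL _ hY ih => simp [Proc.keys, ih, show _ = ∅ from hY]
  | sumR _ hX ih => simp [Proc.keys, ih, show _ = ∅ from hX]

theorem Bwd.key_not_mem (h : Bwd Y θ X) : θ.key ∉ X.keys := by
  induction h with
  | act hX => simp [Proc.keys, show _ = ∅ from hX]
  | pre _ hk ih => simp [Proc.keys, ih, hk]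
  | res _ _ _ ih => exact ih
  | parL _ hk ih => simp [Proc.keys, ELab.key, ih, hk]
  | parR _ hk ih => simp [Proc.keys, ELab.key, ih, hk]
  | syn _ _ _ _ hk ih₁ ih₂ => simp [Proc.keys, ELab.key, ih₁, hk ▸ ih₂]
  | sumL _ hY ih => simp [Proc.keys, ih, show _ = ∅ from hY]
  | sumR _ hX ih => simp [Proc.keys, ih, show _ = ∅ from hX]

theorem Bwd.key_mem (h : Bwd Y θ X) : θ.key ∈ Y.keys :=
  h.keys_eq ▸ Set.mem_insert _ _

theorem Bwd.keys_subset (h : Bwd Y θ X) : X.keys ⊆ Y.keys :=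
  h.keys_eq ▸ Set.subset_insert _ _

theorem Bwd.not_std (h : Bwd Y θ X) : ¬ Y.std := fun hY => by
  simpa [show Y.keys = ∅ from hY] using h.key_mem

end Keys

section Concurrency

variable {a b c d : ELab}

theorem Dep.of_parL_parL (h : Dep (.parL a) (.parL b)) : Dep a b := by
  cases h; assumption

theorem Dep.of_parR_parR (h : Dep (.parR a) (.parR b)) : Dep a b := by
  cases h; assumption

theorem not_dep_parL_parR : ¬ Dep (.parL a) (.parR b) := nofun

theorem not_dep_parR_parL : ¬ Dep (.parR a) (.parL b) := nofun

theorem Dep.of_parL_syn (h : Dep (.parL a) (.syn (.parL b) (.parR c))) : Dep a b := by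
  cases h with
  | synTgtL h => exact h.of_parL_parL
  | synTgtR h => exact (not_dep_parL_parR h).elim

theorem Dep.of_parR_syn (h : Dep (.parR a) (.syn (.parL b) (.parR c))) : Dep a c := by
  cases h with
  | synTgtL h => exact (not_dep_parR_parL h).elim
  | synTgtR h => exact h.of_parR_parR

theorem Dep.of_syn_parL (h : Dep (.syn (.parL a) (.parR b)) (.parL c)) : Dep a c := by
  cases h with
  | synSrcL h => exact h.of_parL_parL
  | synSrcR h => exact (not_dep_parR_parL h).elim

theorem Dep.of_syn_parR (h : Dep (.syn (.parL a) (.parR b)) (.parR c)) : Dep b c := by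
  cases h with
  | synSrcL h => exact (not_dep_parL_parR h).elim
  | synSrcR h => exact h.of_parR_parR

theorem Dep.of_syn_syn (h : Dep (.syn (.parL a) (.parR b)) (.syn (.parL c) (.parR d))) :
    Dep a c ∨ Dep b d := by
  cases h with
  | synSrcL h => exact .inl h.of_parL_syn
  | synSrcR h => exact .inr h.of_parR_syn
  | synTgtL h => exact .inl h.of_syn_parL
  | synTgtR h => exact .inr h.of_syn_parR
  | synSynL h => exact .inl h.of_parL_parL
  | synSynR h => exact .inr h.of_parR_parR

theorem Conc.parL (h : Conc a b) : Conc (.parL a) (.parL b) :=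
  ⟨fun hd => h.1 hd.of_parL_parL, fun hd => h.2 hd.of_parL_parL⟩

theorem Conc.parR (h : Conc a b) : Conc (.parR a) (.parR b) :=
  ⟨fun hd => h.1 hd.of_parR_parR, fun hd => h.2 hd.of_parR_parR⟩

theorem conc_parL_parR : Conc (.parL a) (.parR b) :=
  ⟨not_dep_parL_parR, not_dep_parR_parL⟩

theorem conc_parR_parL : Conc (.parR a) (.parL b) :=
  ⟨not_dep_parR_parL, not_dep_parL_parR⟩

theorem Conc.parL_syn (h : Conc a b) : Conc (.parL a) (.syn (.parL b) (.parR c)) :=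
  ⟨fun hd => h.1 hd.of_parL_syn, fun hd => h.2 hd.of_syn_parL⟩

theorem Conc.parR_syn (h : Conc a c) : Conc (.parR a) (.syn (.parL b) (.parR c)) :=
  ⟨fun hd => h.1 hd.of_parR_syn, fun hd => h.2 hd.of_syn_parR⟩

theorem Conc.syn_parL (h : Conc a c) : Conc (.syn (.parL a) (.parR b)) (.parL c) :=
  ⟨fun hd => h.1 hd.of_syn_parL, fun hd => h.2 hd.of_parL_syn⟩

theorem Conc.syn_parR (h : Conc b c) : Conc (.syn (.parL a) (.parR b)) (.parR c) :=
  ⟨fun hd => h.1 hd.of_syn_parR, fun hd => h.2 hd.of_parR_syn⟩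

theorem Conc.syn_syn (h₁ : Conc a c) (h₂ : Conc b d) :
    Conc (.syn (.parL a) (.parR b)) (.syn (.parL c) (.parR d)) :=
  ⟨fun hd => hd.of_syn_syn.elim h₁.1 h₂.1, fun hd => hd.of_syn_syn.elim h₁.2 h₂.2⟩

end Concurrency

def BwdDiamond (Y : Proc) (θ₁ : ELab) (X : Proc) : Prop :=
  ∀ ⦃θ₂ : ELab⦄ ⦃Z : Proc⦄, Bwd Y θ₂ Z →
    (θ₁ = θ₂ ∧ X = Z) ∨ (Conc θ₁ θ₂ ∧ ∃ W, Bwd X θ₂ W ∧ Bwd Z θ₁ W)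

section Diamond

variable {P P' Q Q' : Proc} {θ θ' : ELab}

theorem BwdDiamond.parL (ih : BwdDiamond P θ P') (h : Bwd P θ P') (hk : θ.key ∉ Q.keys) :
    BwdDiamond (P.par Q) (.parL θ) (P'.par Q) := by
  intro θ₂ Z h₂
  cases h₂ with
  | parL h₂ hk₂ =>
      rcases ih h₂ with ⟨rfl, rfl⟩ | ⟨hc, W, hW, hW'⟩
      · exact .inl ⟨rfl, rfl⟩
      · exact .inr ⟨hc.parL, _, .parL hW hk₂, .parL hW' hk⟩
  | parR h₂ hk₂ =>
      exact .inr ⟨conc_parL_parR, _, .parR h₂ (fun hm => hk₂ (h.keys_subset hm)),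
        .parL h (fun hm => hk (h₂.keys_subset hm))⟩
  | syn h₂ h₃ hτ hco hkk =>
      rcases ih h₂ with ⟨rfl, rfl⟩ | ⟨hc, W, hW, hW'⟩
      · exact (hk (hkk ▸ h₃.key_mem)).elim
      · exact .inr ⟨hc.parL_syn, _, .syn hW h₃ hτ hco hkk,
          .parL hW' (fun hm => hk (h₃.keys_subset hm))⟩

theorem BwdDiamond.parR (ih : BwdDiamond Q θ Q') (h : Bwd Q θ Q') (hk : θ.key ∉ P.keys) :
    BwdDiamond (P.par Q) (.parR θ) (P.par Q') := by
  intro θ₂ Z h₂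
  cases h₂ with
  | parR h₂ hk₂ =>
      rcases ih h₂ with ⟨rfl, rfl⟩ | ⟨hc, W, hW, hW'⟩
      · exact .inl ⟨rfl, rfl⟩
      · exact .inr ⟨hc.parR, _, .parR hW hk₂, .parR hW' hk⟩
  | parL h₂ hk₂ =>
      exact .inr ⟨conc_parR_parL, _, .parL h₂ (fun hm => hk₂ (h.keys_subset hm)),
        .parR h (fun hm => hk (h₂.keys_subset hm))⟩
  | syn h₂ h₃ hτ hco hkk =>
      rcases ih h₃ with ⟨rfl, rfl⟩ | ⟨hc, W, hW, hW'⟩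
      · exact (hk (hkk ▸ h₂.key_mem)).elim
      · exact .inr ⟨hc.parR_syn, _, .syn h₂ hW hτ hco hkk,
          .parR hW' (fun hm => hk (h₂.keys_subset hm))⟩

theorem BwdDiamond.syn (ih : BwdDiamond P θ P') (ih' : BwdDiamond Q θ' Q') (h : Bwd P θ P')
    (h' : Bwd Q θ' Q') (hτ : θ.act ≠ .tau) (hco : θ'.act = θ.act.co)
    (hkk : θ'.key = θ.key) :
    BwdDiamond (P.par Q) (.syn (.parL θ) (.parR θ')) (P'.par Q') := by
  intro θ₂ Z h₂
  cases h₂ with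
  | parL h₂ hk₂ =>
      rcases ih h₂ with ⟨rfl, rfl⟩ | ⟨hc, W, hW, hW'⟩
      · exact (hk₂ (hkk ▸ h'.key_mem)).elim
      · exact .inr ⟨hc.syn_parL, _, .parL hW (fun hm => hk₂ (h'.keys_subset hm)),
          .syn hW' h' hτ hco hkk⟩
  | parR h₂ hk₂ =>
      rcases ih' h₂ with ⟨rfl, rfl⟩ | ⟨hc, W, hW, hW'⟩
      · exact (hk₂ (hkk ▸ h.key_mem)).elim
      · exact .inr ⟨hc.syn_parR, _, .parR hW (fun hm => hk₂ (h.keys_subset hm)),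
          .syn h hW' hτ hco hkk⟩
  | syn h₂ h₂' hτ₂ hco₂ hkk₂ =>
      -- sharing exactly one partner is impossible: both partners carry the key of the
      -- synchronisation, and the key of a backward step no longer occurs in its target
      rcases ih h₂ with ⟨rfl, rfl⟩ | ⟨hc, W, hW, hW'⟩ <;>
        rcases ih' h₂' with ⟨rfl, rfl⟩ | ⟨hc', V, hV, hV'⟩
      · exact .inl ⟨rfl, rfl⟩
      · exact (h'.key_not_mem (by rw [hkk, ← hkk₂]; exact hV.key_mem)).elim
      · exact (h.key_not_mem (by rw [← hkk, hkk₂]; exact hW.key_mem)).elim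
      · exact .inr ⟨hc.syn_syn hc', _, .syn hW hV hτ₂ hco₂ hkk₂,
          .syn hW' hV' hτ hco hkk⟩

end Diamond

theorem Bwd.eq_or_diamond {Y X : Proc} {θ : ELab} (h : Bwd Y θ X) : BwdDiamond Y θ X := by
  induction h with
  | act hX =>
      intro θ₂ Z h₂
      cases h₂ with
      | act => exact .inl ⟨rfl, rfl⟩
      | pre h₂ => exact (h₂.not_std hX).elim
  | pre h hk ih =>
      intro θ₂ Z h₂
      cases h₂ with
      | act hX => exact (h.not_std hX).elim
      | pre h₂ hk₂ =>
          rcases ih h₂ with ⟨rfl, rfl⟩ | ⟨hc, W, hW, hW'⟩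
          · exact .inl ⟨rfl, rfl⟩
          · exact .inr ⟨hc, _, .pre hW hk₂, .pre hW' hk⟩
  | res _ hn hcn ih =>
      intro θ₂ Z h₂
      cases h₂ with
      | res h₂ hn₂ hcn₂ =>
          rcases ih h₂ with ⟨rfl, rfl⟩ | ⟨hc, W, hW, hW'⟩
          · exact .inl ⟨rfl, rfl⟩
          · exact .inr ⟨hc, _, .res hW hn₂ hcn₂, .res hW' hn hcn⟩
  | parL h hk ih => exact ih.parL h hk
  | parR h hk ih => exact ih.parR h hk
  | syn h h' hτ hco hkk ih ih' => exact ih.syn ih' h h' hτ hco hkk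
  | sumL h hQ ih =>
      intro θ₂ Z h₂
      cases h₂ with
      | sumL h₂ _ =>
          rcases ih h₂ with ⟨rfl, rfl⟩ | ⟨hc, W, hW, hW'⟩
          · exact .inl ⟨rfl, rfl⟩
          · exact .inr ⟨hc, _, .sumL hW hQ, .sumL hW' hQ⟩
      | sumR _ hP => exact (h.not_std hP).elim
  | sumR h hP ih =>
      intro θ₂ Z h₂
      cases h₂ with
      | sumR h₂ _ =>
          rcases ih h₂ with ⟨rfl, rfl⟩ | ⟨hc, W, hW, hW'⟩
          · exact .inl ⟨rfl, rfl⟩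
          · exact .inr ⟨hc, _, .sumR hW hP, .sumR hW' hP⟩
      | sumL _ hQ => exact (h.not_std hQ).elim

namespace Trace

variable {X Y Z W : Proc}

theorem comp_nil (T : Trace X Y) : T.comp (.nil Y) = T := by
  induction T with
  | nil => rfl
  | cons d θ s T ih => rw [comp, ih]

theorem comp_assoc (T : Trace X Y) (U : Trace Y Z) (V : Trace Z W) :
    (T.comp U).comp V = T.comp (U.comp V) := by
  induction T with
  | nil => rfl
  | cons d θ s T ih => rw [comp, comp, comp, ih]

theorem length_comp (T : Trace X Y) (U : Trace Y Z) :
    (T.comp U).length = T.length + U.length := by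
  induction T with
  | nil => simp [comp, length]
  | cons d θ s T ih => simp only [comp, length, ih]; omega

theorem AllDir.comp {d : Bool} {T : Trace X Y} {U : Trace Y Z} (hT : T.AllDir d)
    (hU : U.AllDir d) : (T.comp U).AllDir d := by
  induction T with
  | nil => exact hU
  | cons d' θ s T ih => exact ⟨hT.1, ih hT.2 hU⟩

end Trace

theorem CEq.comp_right {X Y Z : Proc} {T T' : Trace X Y} (h : CEq T T') (U : Trace Y Z) :
    CEq (T.comp U) (T'.comp U) := by
  induction h with
  | refl T => exact .refl _
  | symm _ ih => exact (ih U).symm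
  | trans _ _ ih ih' => exact (ih U).trans (ih' U)
  | congr s _ ih => exact .congr s (ih U)
  | cancel s s' T => exact .cancel s s' (T.comp U)
  | square s₁ t₂ s₂ t₁ hc T => exact .square s₁ t₂ s₂ t₁ hc (T.comp U)

namespace Trace

variable {X X₁ Y Z : Proc}

def HasParabolicForm (T : Trace X Y) : Prop :=
  ∃ (Z : Proc) (B : Trace X Z) (F : Trace Z Y),
    B.AllDir false ∧ F.AllDir true ∧ CEq T (B.comp F) ∧ B.length + F.length ≤ T.length

theorem hasParabolicForm_of_allDir_false {B : Trace X Y} (hB : B.AllDir false) :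
    B.HasParabolicForm :=
  ⟨Y, B, .nil Y, hB, trivial, by rw [comp_nil]; exact .refl B, by simp [length]⟩

theorem HasParabolicForm.of_ceq {T T' : Trace X Y} (h : T'.HasParabolicForm) (hc : CEq T T')
    (hl : T'.length ≤ T.length) : T.HasParabolicForm :=
  let ⟨Z, B, F, hB, hF, hc', hl'⟩ := h
  ⟨Z, B, F, hB, hF, hc.trans hc', hl'.trans hl⟩

theorem HasParabolicForm.cons_bwd {T : Trace X₁ Y} (h : T.HasParabolicForm) {θ : ELab}
    (s : Bwd X θ X₁) : (cons false θ s T).HasParabolicForm :=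
  let ⟨Z, B, F, hB, hF, hc, hl⟩ := h
  ⟨Z, cons false θ s B, F, ⟨rfl, hB⟩, hF, .congr (d := false) s hc,
    by simp only [length]; omega⟩

theorem HasParabolicForm.comp_fwd {T : Trace X Y} (h : T.HasParabolicForm) {U : Trace Y Z}
    (hU : U.AllDir true) : (T.comp U).HasParabolicForm :=
  let ⟨W, B, F, hB, hF, hc, hl⟩ := h
  ⟨W, B, F.comp U, hB, hF.comp hU, by rw [← comp_assoc]; exact hc.comp_right U,
    by simp only [length_comp]; omega⟩

theorem hasParabolicForm_cons_fwd {B : Trace X₁ Y} (hB : B.AllDir false) {θ : ELab}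
    (s : Fwd X θ X₁) : (cons true θ s B).HasParabolicForm := by
  induction B generalizing X θ with
  | nil =>
      exact ⟨X, .nil X, cons true θ s (.nil _), trivial, ⟨rfl, trivial⟩, .refl _, le_rfl⟩
  | cons d ψ t B ih =>
      obtain ⟨rfl, hB⟩ := hB
      rcases (fwd_iff_bwd.1 s).eq_or_diamond t with ⟨rfl, rfl⟩ | ⟨hc, W, hW, hW'⟩
      · exact (hasParabolicForm_of_allDir_false hB).of_ceq (.cancel (d := true) s t B)
          (by simp only [length]; omega)
      · have s' : Fwd W θ _ := fwd_iff_bwd.2 hW'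
        exact ((ih hB s').cons_bwd hW).of_ceq
          (.square (d₁ := true) (d₂ := false) s t hW s' hc B) le_rfl

theorem hasParabolicForm (T : Trace X Y) : T.HasParabolicForm := by
  induction T with
  | nil X => exact hasParabolicForm_of_allDir_false (B := .nil X) trivial
  | cons d θ s T ih =>
      cases d with
      | false => exact ih.cons_bwd s
      | true =>
          obtain ⟨Z, B, F, hB, hF, hc, hl⟩ := ih
          exact ((hasParabolicForm_cons_fwd hB s).comp_fwd hF).of_ceq (.congr s hc)
            (by simp only [length, length_comp]; omega)

end Trace

end CCSK

open CCSK in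
/-- Parabolic lemma: any trace is causally equivalent to a backward-only trace
followed by a forward-only trace, of length at most that of the original. -/
theorem parabolic_lemma : ∀ (X Y : Proc), Reachable X → ∀ T : Trace X Y,
    ∃ (Z : Proc) (B : Trace X Z) (F : Trace Z Y),
      B.AllDir false ∧ F.AllDir true ∧ CEq T (B.comp F) ∧
      B.length + F.length ≤ T.length :=
  fun _ _ _ T => T.hasParabolicForm
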